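/- For each j, the reflection r_j satisfies r_j ∘ s_i = s_i ∘ r_j for all i ≠ j and r_j ∘ s_j = s_j⁻¹ ∘ r_j. Consequently each r_j normalizes Γ(A), so that r_j induces an involution on the quotient space ℝⁿ/Γ(A), and the induced involutions for j = 1,…,n commute with one another. -/

import Mathlib

noncomputable def bottMotion {n : ℕ} (A : Matrix (Fin n) (Fin n) (ZMod 2)) (i : Fin n) :
    Equiv.Perm (Fin n → ℝ) where
  toFun u := fun j => (-1 : ℝ) ^ (A i j).val * u j + if j = i then 2⁻¹ else 0
  invFun v := fun j => (-1 : ℝ) ^ (A i j).val * (v j - if j = i then 2⁻¹ else 0)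
  left_inv u := by
    funext j
    have h : ((-1 : ℝ) ^ (A i j).val) * ((-1 : ℝ) ^ (A i j).val) = 1 := by
      rw [← pow_add]
      exact Even.neg_one_pow ⟨(A i j).val, rfl⟩
    dsimp only
    rw [add_sub_cancel_right, ← mul_assoc, h, one_mul]
  right_inv v := by
    funext j
    have h : ((-1 : ℝ) ^ (A i j).val) * ((-1 : ℝ) ^ (A i j).val) = 1 := by
      rw [← pow_add]
      exact Even.neg_one_pow ⟨(A i j).val, rfl⟩
    dsimp only
    rw [← mul_assoc, h, one_mul, sub_add_cancel]

noncomputable def bottGroup {n : ℕ} (A : Matrix (Fin n) (Fin n) (ZMod 2)) :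
    Subgroup (Equiv.Perm (Fin n → ℝ)) :=
  Subgroup.closure (Set.range (bottMotion A))

/-- The reflection r_j of ℝⁿ negating the j-th coordinate. -/
def reflCoord (n : ℕ) (j : Fin n) : Equiv.Perm (Fin n → ℝ) :=
  Function.Involutive.toPerm (fun u k => if k = j then -(u k) else u k)
    (by intro u; funext k; by_cases h : k = j <;> simp [h])

section Aux

variable {n : ℕ} (A : Matrix (Fin n) (Fin n) (ZMod 2))

lemma reflCoord_apply (j : Fin n) (u : Fin n → ℝ) (k : Fin n) :
    reflCoord n j u k = if k = j then -(u k) else u k := rfl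

lemma bottMotion_apply (i : Fin n) (u : Fin n → ℝ) (k : Fin n) :
    bottMotion A i u k = (-1 : ℝ) ^ (A i k).val * u k + if k = i then 2⁻¹ else 0 := rfl

lemma bottMotion_inv_apply (i : Fin n) (v : Fin n → ℝ) (k : Fin n) :
    (bottMotion A i)⁻¹ v k
      = (-1 : ℝ) ^ (A i k).val * (v k - if k = i then 2⁻¹ else 0) := rfl

lemma reflCoord_involutive (j : Fin n) (u : Fin n → ℝ) :
    reflCoord n j (reflCoord n j u) = u := by
  funext k
  by_cases h : k = j <;> simp [reflCoord_apply, h]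

lemma reflCoord_inv (j : Fin n) : (reflCoord n j)⁻¹ = reflCoord n j := rfl

lemma reflCoord_sq (j : Fin n) : reflCoord n j * reflCoord n j = 1 := by
  ext u
  exact congrFun (reflCoord_involutive j u) _

lemma reflCoord_comm_apply (j k : Fin n) (u : Fin n → ℝ) :
    reflCoord n j (reflCoord n k u) = reflCoord n k (reflCoord n j u) := by
  funext m
  simp only [reflCoord_apply]
  split_ifs <;> ring

lemma refl_comm (j i : Fin n) (h : i ≠ j) :
    reflCoord n j * bottMotion A i = bottMotion A i * reflCoord n j := by
  ext u k
  show reflCoord n j (bottMotion A i u) k = bottMotion A i (reflCoord n j u) k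
  rw [reflCoord_apply, bottMotion_apply, bottMotion_apply, reflCoord_apply]
  by_cases hk : k = j
  · have hki : ¬ k = i := fun h' => h (h'.symm.trans hk)
    simp only [if_pos hk, if_neg hki]
    ring
  · simp [hk]

lemma refl_swap (j : Fin n) (hA : ∀ i j : Fin n, j ≤ i → A i j = 0) :
    reflCoord n j * bottMotion A j = (bottMotion A j)⁻¹ * reflCoord n j := by
  have hAjj : (A j j).val = 0 := by rw [hA j j le_rfl]; rfl
  ext u k
  show reflCoord n j (bottMotion A j u) k = (bottMotion A j)⁻¹ (reflCoord n j u) k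
  rw [reflCoord_apply, bottMotion_apply, bottMotion_inv_apply, reflCoord_apply]
  by_cases hk : k = j
  · subst hk
    simp [hAjj]
    ring
  · simp [hk]

lemma refl_conj_gen (j i : Fin n) (hA : ∀ i j : Fin n, j ≤ i → A i j = 0) :
    reflCoord n j * bottMotion A i * (reflCoord n j)⁻¹
      = if i = j then (bottMotion A j)⁻¹ else bottMotion A i := by
  by_cases h : i = j
  · subst h
    rw [if_pos rfl, refl_swap A i hA, mul_assoc, reflCoord_inv, reflCoord_sq, mul_one]
  · rw [if_neg h, refl_comm A j i h, mul_assoc, reflCoord_inv, reflCoord_sq, mul_one]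

lemma refl_normalizes (hA : ∀ i j : Fin n, j ≤ i → A i j = 0) (j : Fin n) :
    ∀ g ∈ bottGroup A, reflCoord n j * g * (reflCoord n j)⁻¹ ∈ bottGroup A := by
  intro g hg
  refine Subgroup.closure_induction ?_ ?_ ?_ ?_ hg
  · rintro x ⟨i, rfl⟩
    rw [refl_conj_gen A j i hA]
    by_cases h : i = j
    · rw [if_pos h]
      exact inv_mem (Subgroup.subset_closure ⟨j, rfl⟩)
    · rw [if_neg h]
      exact Subgroup.subset_closure ⟨i, rfl⟩
  · simpa using (bottGroup A).one_mem
  · intro x y _ _ hx hy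
    have : reflCoord n j * (x * y) * (reflCoord n j)⁻¹
        = (reflCoord n j * x * (reflCoord n j)⁻¹) * (reflCoord n j * y * (reflCoord n j)⁻¹) := by
      group
    rw [this]
    exact mul_mem hx hy
  · intro x _ hx
    have : reflCoord n j * x⁻¹ * (reflCoord n j)⁻¹
        = (reflCoord n j * x * (reflCoord n j)⁻¹)⁻¹ := by group
    rw [this]
    exact inv_mem hx

lemma refl_orbit (hA : ∀ i j : Fin n, j ≤ i → A i j = 0) (j : Fin n) {a b : Fin n → ℝ}
    (h : a ∈ MulAction.orbit (bottGroup A) b) :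
    reflCoord n j a ∈ MulAction.orbit (bottGroup A) (reflCoord n j b) := by
  obtain ⟨⟨g, hg⟩, rfl⟩ := h
  refine ⟨⟨reflCoord n j * g * (reflCoord n j)⁻¹, refl_normalizes A hA j g hg⟩, ?_⟩
  show (reflCoord n j * g * (reflCoord n j)⁻¹) • (reflCoord n j b) = reflCoord n j (g • b)
  simp only [Equiv.Perm.smul_def, Equiv.Perm.mul_apply, reflCoord_inv]
  rw [reflCoord_involutive]

lemma refl_orbit_iff (hA : ∀ i j : Fin n, j ≤ i → A i j = 0) (j : Fin n) (a b : Fin n → ℝ) :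
    MulAction.orbitRel (bottGroup A) (Fin n → ℝ) a b ↔
      MulAction.orbitRel (bottGroup A) (Fin n → ℝ) (reflCoord n j a) (reflCoord n j b) := by
  rw [MulAction.orbitRel_apply, MulAction.orbitRel_apply]
  constructor
  · exact refl_orbit A hA j
  · intro h
    have := refl_orbit A hA j h
    rwa [reflCoord_involutive, reflCoord_involutive] at this

lemma continuous_reflCoord (j : Fin n) : Continuous (reflCoord n j) := by
  show Continuous fun (u : Fin n → ℝ) (k : Fin n) => if k = j then -(u k) else u k
  refine continuous_pi fun k => ?_
  by_cases h : k = j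
  · simp only [if_pos h]
    exact (continuous_apply (A := fun _ : Fin n => ℝ) k).neg
  · simp only [if_neg h]
    exact continuous_apply (A := fun _ : Fin n => ℝ) k

/-- The induced involution on the quotient. -/
noncomputable def reflQuot (hA : ∀ i j : Fin n, j ≤ i → A i j = 0) (j : Fin n) :
    Quotient (MulAction.orbitRel (bottGroup A) (Fin n → ℝ)) ≃ₜ
      Quotient (MulAction.orbitRel (bottGroup A) (Fin n → ℝ)) where
  toFun := Quotient.map' (reflCoord n j) (fun a b h => (refl_orbit_iff A hA j a b).mp h)
  invFun := Quotient.map' (reflCoord n j) (fun a b h => (refl_orbit_iff A hA j a b).mp h)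
  left_inv := by
    intro q
    induction q using Quotient.ind with
    | _ x => exact congrArg _ (reflCoord_involutive j x)
  right_inv := by
    intro q
    induction q using Quotient.ind with
    | _ x => exact congrArg _ (reflCoord_involutive j x)
  continuous_toFun := Continuous.quotient_map' (continuous_reflCoord j)
    (fun a b h => (refl_orbit_iff A hA j a b).mp h)
  continuous_invFun := Continuous.quotient_map' (continuous_reflCoord j)
    (fun a b h => (refl_orbit_iff A hA j a b).mp h)

lemma reflQuot_mk (hA : ∀ i j : Fin n, j ≤ i → A i j = 0) (j : Fin n) (x : Fin n → ℝ) :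
    reflQuot A hA j (Quotient.mk (MulAction.orbitRel (bottGroup A) (Fin n → ℝ)) x)
      = Quotient.mk (MulAction.orbitRel (bottGroup A) (Fin n → ℝ)) (reflCoord n j x) := by
  exact rfl

end Aux

/-- r_j ∘ s_i = s_i ∘ r_j for i ≠ j and r_j ∘ s_j = s_j⁻¹ ∘ r_j;
consequently each r_j normalizes Γ(A) and hence induces an involution on the
quotient space ℝⁿ/Γ(A), and the induced involutions commute with one another. -/
theorem bott_reflections {n : ℕ} (A : Matrix (Fin n) (Fin n) (ZMod 2))
    (hA : ∀ i j : Fin n, j ≤ i → A i j = 0) :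
    (∀ j i : Fin n, i ≠ j →
      reflCoord n j * bottMotion A i = bottMotion A i * reflCoord n j) ∧
    (∀ j : Fin n, reflCoord n j * bottMotion A j = (bottMotion A j)⁻¹ * reflCoord n j) ∧
    (∀ j : Fin n, ∀ g ∈ bottGroup A,
      reflCoord n j * g * (reflCoord n j)⁻¹ ∈ bottGroup A) ∧
    ∃ R : Fin n → (Quotient (MulAction.orbitRel (bottGroup A) (Fin n → ℝ)) ≃ₜ
        Quotient (MulAction.orbitRel (bottGroup A) (Fin n → ℝ))),
      (∀ (j : Fin n) (x : Fin n → ℝ),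
        R j (Quotient.mk (MulAction.orbitRel (bottGroup A) (Fin n → ℝ)) x) =
          Quotient.mk (MulAction.orbitRel (bottGroup A) (Fin n → ℝ)) (reflCoord n j x)) ∧
      (∀ j : Fin n, (R j).trans (R j) = Homeomorph.refl _) ∧
      (∀ j k : Fin n, (R j).trans (R k) = (R k).trans (R j)) := by
  refine ⟨fun j i h => refl_comm A j i h, fun j => refl_swap A j hA,
    refl_normalizes A hA, reflQuot A hA, reflQuot_mk A hA, ?_, ?_⟩
  · intro j
    apply Homeomorph.ext
    intro q
    induction q using Quotient.ind with
    | _ x =>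
      show reflQuot A hA j (reflQuot A hA j ⟦x⟧) = ⟦x⟧
      rw [reflQuot_mk, reflQuot_mk, reflCoord_involutive]
  · intro j k
    apply Homeomorph.ext
    intro q
    induction q using Quotient.ind with
    | _ x =>
      show reflQuot A hA k (reflQuot A hA j ⟦x⟧) = reflQuot A hA j (reflQuot A hA k ⟦x⟧)
      rw [reflQuot_mk, reflQuot_mk, reflQuot_mk, reflQuot_mk, reflCoord_comm_apply]
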